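/- Let 1 + 2/n < p < 1 + 2/(n-1) and suppose w ∈ H^{1/2}(ℝ^n) satisfies the Pohozaev-type identity Q(w) = 0, where Q(w) = (1/2)∫ |ξ|²/√(1+|ξ|²) |ŵ(ξ)|² dξ − (n(p-1)/(2(p+1)))‖w‖^{p+1}_{L^{p+1}}. Then E_s(w) ≥ ((np − n − 2)/(2n(p-1))) ‖w‖²_{H^{1/2}(ℝ^n)}, and in particular E_s(w) > 0. -/

import Mathlib

open MeasureTheory Real FourierTransform
open scoped ENNReal

noncomputable section

/-- Euclidean space ℝ^n. -/
abbrev Rn (n : ℕ) := EuclideanSpace ℝ (Fin n)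

/-- Inhomogeneous Sobolev norm `‖u‖_{H^s} = (∫ (1+|ξ|²)^s |û(ξ)|² dξ)^{1/2}`. -/
def HsNorm (n : ℕ) (s : ℝ) (u : Rn n → ℂ) : ℝ :=
  (∫ ξ : Rn n, (1 + ‖ξ‖ ^ 2) ^ s * ‖𝓕 u ξ‖ ^ 2) ^ ((1 : ℝ) / 2)

/-- Homogeneous Sobolev norm `‖u‖_{Ḣ^s} = (∫ |ξ|^{2s} |û(ξ)|² dξ)^{1/2}`. -/
def HdotNorm (n : ℕ) (s : ℝ) (u : Rn n → ℂ) : ℝ :=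
  (∫ ξ : Rn n, ‖ξ‖ ^ (2 * s) * ‖𝓕 u ξ‖ ^ 2) ^ ((1 : ℝ) / 2)

/-- Lebesgue norm `‖u‖_{L^p} = (∫ |u|^p)^{1/p}` (real exponent). -/
def LpNorm (n : ℕ) (p : ℝ) (u : Rn n → ℂ) : ℝ :=
  (∫ x : Rn n, ‖u x‖ ^ p) ^ (1 / p)

/-- `u` is radially symmetric. -/
def IsRadial {n : ℕ} (u : Rn n → ℂ) : Prop :=
  ∀ x y : Rn n, ‖x‖ = ‖y‖ → u x = u y

/-- Membership in the inhomogeneous Sobolev space `H^s(ℝ^n)`. -/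
def InHs (n : ℕ) (s : ℝ) (u : Rn n → ℂ) : Prop :=
  MemLp u 2 (volume : Measure (Rn n)) ∧
    Integrable (fun ξ : Rn n => (1 + ‖ξ‖ ^ 2) ^ s * ‖𝓕 u ξ‖ ^ 2)

/-- Semirelativistic NLS energy. -/
def Es (n : ℕ) (p : ℝ) (u : Rn n → ℂ) : ℝ :=
  (1 / 2) * (HsNorm n (1 / 2) u) ^ 2 - (1 / (p + 1)) * (LpNorm n (p + 1) u) ^ (p + 1)

/-- Pohozaev-type functional for sNLS. -/
def Qfun (n : ℕ) (p : ℝ) (u : Rn n → ℂ) : ℝ :=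
  (1 / 2) * (∫ ξ : Rn n, ‖ξ‖ ^ 2 / Real.sqrt (1 + ‖ξ‖ ^ 2) * ‖𝓕 u ξ‖ ^ 2) -
    ((n : ℝ) * (p - 1) / (2 * (p + 1))) * (LpNorm n (p + 1) u) ^ (p + 1)

/-!
Subtracting `2 / (n (p - 1))` times the Pohozaev functional from the energy cancels the
`L^{p+1}` term, leaving `E_s(w) = ½‖w‖²_{H^{1/2}} - (n (p - 1))⁻¹ ∫ |ξ|² / √(1+|ξ|²) |ŵ|²`.
The multiplier bound `|ξ|² / √(1+|ξ|²) ≤ √(1+|ξ|²)` controls the integral by `‖w‖²_{H^{1/2}}`,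
and `n (p - 1) > 2` makes the resulting coefficient positive.
-/

lemma sq_div_sqrt_one_add_sq_le (t : ℝ) : t ^ 2 / √(1 + t ^ 2) ≤ √(1 + t ^ 2) := by
  have h : 0 < 1 + t ^ 2 := by positivity
  rw [div_le_iff₀ (sqrt_pos.mpr h), mul_self_sqrt h.le]
  linarith

lemma HsNorm_sq (n : ℕ) (s : ℝ) (u : Rn n → ℂ) :
    HsNorm n s u ^ 2 = ∫ ξ : Rn n, (1 + ‖ξ‖ ^ 2) ^ s * ‖𝓕 u ξ‖ ^ 2 := by
  have h : 0 ≤ ∫ ξ : Rn n, (1 + ‖ξ‖ ^ 2) ^ s * ‖𝓕 u ξ‖ ^ 2 :=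
    integral_nonneg fun ξ => by positivity
  rw [HsNorm, ← rpow_natCast, ← rpow_mul h]
  norm_num

lemma integral_multiplier_le_HsNorm_sq {n : ℕ} {u : Rn n → ℂ}
    (hu : Integrable (fun ξ : Rn n => (1 + ‖ξ‖ ^ 2) ^ (1 / 2 : ℝ) * ‖𝓕 u ξ‖ ^ 2)) :
    ∫ ξ : Rn n, ‖ξ‖ ^ 2 / √(1 + ‖ξ‖ ^ 2) * ‖𝓕 u ξ‖ ^ 2 ≤ HsNorm n (1 / 2) u ^ 2 := by
  rw [HsNorm_sq]
  refine integral_mono_of_nonneg (ae_of_all _ fun ξ => by positivity) hu (ae_of_all _ fun ξ => ?_)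
  dsimp only
  rw [← sqrt_eq_rpow]
  gcongr
  exact sq_div_sqrt_one_add_sq_le ‖ξ‖

lemma Es_sub_Qfun {n : ℕ} {p : ℝ} (hnp : (n : ℝ) * (p - 1) ≠ 0) (u : Rn n → ℂ) :
    Es n p u - 2 / (n * (p - 1)) * Qfun n p u =
      1 / 2 * HsNorm n (1 / 2) u ^ 2 -
        (∫ ξ : Rn n, ‖ξ‖ ^ 2 / √(1 + ‖ξ‖ ^ 2) * ‖𝓕 u ξ‖ ^ 2) / (n * (p - 1)) := by
  have hc : 2 / (n * (p - 1)) * (n * (p - 1) / (2 * (p + 1))) = 1 / (p + 1) := by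
    rw [div_mul_div_comm, mul_comm (n * (p - 1) : ℝ), mul_div_mul_right _ _ hnp,
      div_mul_cancel_left₀ two_ne_zero, one_div]
  rw [Es, Qfun]
  linear_combination LpNorm n (p + 1) u ^ (p + 1) * hc

lemma Es_ge_of_Qfun_eq_zero {n : ℕ} {p : ℝ} (hnp : 0 < (n : ℝ) * (p - 1)) {u : Rn n → ℂ}
    (hu : Integrable (fun ξ : Rn n => (1 + ‖ξ‖ ^ 2) ^ (1 / 2 : ℝ) * ‖𝓕 u ξ‖ ^ 2))
    (hQ : Qfun n p u = 0) :
    ((n * p - n - 2) / (2 * n * (p - 1))) * HsNorm n (1 / 2) u ^ 2 ≤ Es n p u := by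
  have hEs := Es_sub_Qfun hnp.ne' u
  rw [hQ, mul_zero, sub_zero] at hEs
  have hcoeff : ((n : ℝ) * p - n - 2) / (2 * n * (p - 1)) = 1 / 2 - 1 / (n * (p - 1)) := by
    have hk : ((n : ℝ) * p - n - 2) / (2 * n * (p - 1)) =
        (n * (p - 1) - 2) / (2 * (n * (p - 1))) := by ring
    rw [hk]
    generalize (n : ℝ) * (p - 1) = k at hnp ⊢
    field_simp
  rw [hEs, hcoeff, sub_mul, one_div_mul_eq_div (n * (p - 1) : ℝ)]
  gcongr
  exact integral_multiplier_le_HsNorm_sq hu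

theorem Es_positive_on_Pohozaev_general (n : ℕ) (p : ℝ) (hn : 1 ≤ n)
    (hp1 : 1 + 2 / (n : ℝ) < p)
    (w : Rn n → ℂ) (hw : InHs n (1 / 2) w)
    (hpos : 0 < HsNorm n (1 / 2) w)
    (hQ : Qfun n p w = 0) :
    (((n : ℝ) * p - n - 2) / (2 * (n : ℝ) * (p - 1))) * (HsNorm n (1 / 2) w) ^ 2 ≤
        Es n p w ∧ 0 < Es n p w := by
  have hn0 : (0 : ℝ) < n := by exact_mod_cast hn
  have hnp : 2 < (n : ℝ) * (p - 1) := by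
    have := (div_lt_iff₀ hn0).mp (show 2 / (n : ℝ) < p - 1 by linarith)
    linarith
  have hbound := Es_ge_of_Qfun_eq_zero (by linarith) hw.2 hQ
  refine ⟨hbound, lt_of_lt_of_le ?_ hbound⟩
  have hcoeff : 0 < ((n : ℝ) * p - n - 2) / (2 * n * (p - 1)) :=
    div_pos (by linarith) (by linarith)
  positivity

/-- On the Pohozaev constraint `Q(w) = 0`, the sNLS energy is coercive and positive. -/
theorem Es_positive_on_Pohozaev (n : ℕ) (p : ℝ) (hn : 1 ≤ n)
    (hp1 : 1 + 2 / (n : ℝ) < p) (hp2 : p < 1 + 2 / ((n : ℝ) - 1))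
    (w : Rn n → ℂ) (hw : InHs n (1 / 2) w)
    (hLp : Integrable (fun x : Rn n => ‖w x‖ ^ (p + 1)))
    (hpos : 0 < HsNorm n (1 / 2) w)
    (hQ : Qfun n p w = 0) :
    (((n : ℝ) * p - n - 2) / (2 * (n : ℝ) * (p - 1))) * (HsNorm n (1 / 2) w) ^ 2 ≤
        Es n p w ∧ 0 < Es n p w :=
  Es_positive_on_Pohozaev_general n p hn hp1 w hw hpos hQ
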